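/- For every Harrop formula A there exists a finite multiset Γ_A of modal Horn formulas constructed only from ⊥ and angled atoms such that CK proves Γ_A ⇒ A^t, and CK proves both ⋀Γ_A^s ⇒ A and A ⇒ ⋀Γ_A^s, where s is the standard substitution. -/

import Mathlib

set_option autoImplicit false

namespace UPT

/-- Modal formulas over atoms of type `α` (the language `ℒ = {∧,∨,→,⊤,⊥,□,◇}`). -/
inductive Fml (α : Type) : Type where
  | atom : α → Fml α
  | top  : Fml α
  | bot  : Fml α
  | and  : Fml α → Fml α → Fml α
  | or   : Fml α → Fml α → Fml α
  | imp  : Fml α → Fml α → Fml α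
  | box  : Fml α → Fml α
  | dia  : Fml α → Fml α
deriving DecidableEq

variable {α β : Type}

/-- Simultaneous substitution of formulas for atoms. -/
def Fml.subst (σ : β → Fml α) : Fml β → Fml α
  | .atom b  => σ b
  | .top     => .top
  | .bot     => .bot
  | .and A B => .and (A.subst σ) (B.subst σ)
  | .or A B  => .or (A.subst σ) (B.subst σ)
  | .imp A B => .imp (A.subst σ) (B.subst σ)
  | .box A   => .box (A.subst σ)
  | .dia A   => .dia (A.subst σ)

/-- A sequent: a finite multiset antecedent together with a succedent
containing at most one formula. -/
abbrev Seq (α : Type) : Type := Multiset (Fml α) × Option (Fml α)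

/-- A rule set relates a (finite) list of premise sequents to a conclusion sequent. -/
abbrev RuleSet (α : Type) : Type := List (Seq α) → Seq α → Prop

/-- The axioms and rules of the single-conclusion sequent calculus `LJ`, stated
schematically: they are closed under substituting arbitrary formulas for atoms
and arbitrary multisets (resp. succedents) for the context variables. -/
inductive LJRule : List (Seq α) → Seq α → Prop where
  | id (Γ : Multiset (Fml α)) (A : Fml α) : LJRule [] (A ::ₘ Γ, some A)
  | botL (Γ : Multiset (Fml α)) (Δ : Option (Fml α)) : LJRule [] (.bot ::ₘ Γ, Δ)
  | topR (Γ : Multiset (Fml α)) : LJRule [] (Γ, some .top)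
  | wL (A : Fml α) (Γ : Multiset (Fml α)) (Δ : Option (Fml α)) :
      LJRule [(Γ, Δ)] (A ::ₘ Γ, Δ)
  | wR (A : Fml α) (Γ : Multiset (Fml α)) : LJRule [(Γ, none)] (Γ, some A)
  | cL (A : Fml α) (Γ : Multiset (Fml α)) (Δ : Option (Fml α)) :
      LJRule [(A ::ₘ A ::ₘ Γ, Δ)] (A ::ₘ Γ, Δ)
  | cut (A : Fml α) (Γ : Multiset (Fml α)) (Δ : Option (Fml α)) :
      LJRule [(Γ, some A), (A ::ₘ Γ, Δ)] (Γ, Δ)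
  | andL₁ (A B : Fml α) (Γ : Multiset (Fml α)) (Δ : Option (Fml α)) :
      LJRule [(A ::ₘ Γ, Δ)] (.and A B ::ₘ Γ, Δ)
  | andL₂ (A B : Fml α) (Γ : Multiset (Fml α)) (Δ : Option (Fml α)) :
      LJRule [(B ::ₘ Γ, Δ)] (.and A B ::ₘ Γ, Δ)
  | andR (A B : Fml α) (Γ : Multiset (Fml α)) :
      LJRule [(Γ, some A), (Γ, some B)] (Γ, some (.and A B))
  | orL (A B : Fml α) (Γ : Multiset (Fml α)) (Δ : Option (Fml α)) :
      LJRule [(A ::ₘ Γ, Δ), (B ::ₘ Γ, Δ)] (.or A B ::ₘ Γ, Δ)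
  | orR₁ (A B : Fml α) (Γ : Multiset (Fml α)) : LJRule [(Γ, some A)] (Γ, some (.or A B))
  | orR₂ (A B : Fml α) (Γ : Multiset (Fml α)) : LJRule [(Γ, some B)] (Γ, some (.or A B))
  | impL (A B : Fml α) (Γ : Multiset (Fml α)) (Δ : Option (Fml α)) :
      LJRule [(Γ, some A), (B ::ₘ Γ, Δ)] (.imp A B ::ₘ Γ, Δ)
  | impR (A B : Fml α) (Γ : Multiset (Fml α)) :
      LJRule [(A ::ₘ Γ, some B)] (Γ, some (.imp A B))

/-- The rule `K_□`: from `Γ ⇒ A` infer `□Γ ⇒ □A`. -/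
inductive KBoxRule : List (Seq α) → Seq α → Prop where
  | mk (Γ : Multiset (Fml α)) (A : Fml α) :
      KBoxRule [(Γ, some A)] (Γ.map Fml.box, some (.box A))

/-- The rule `K_◇`: from `Γ, A ⇒ B` infer `□Γ, ◇A ⇒ ◇B`. -/
inductive KDiaRule : List (Seq α) → Seq α → Prop where
  | mk (Γ : Multiset (Fml α)) (A B : Fml α) :
      KDiaRule [(A ::ₘ Γ, some B)] (.dia A ::ₘ Γ.map Fml.box, some (.dia B))

/-- The rule `◇L`: from `Γ, A ⇒ B` infer `Γ, ◇A ⇒ ◇B`. -/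
inductive DiaLRule : List (Seq α) → Seq α → Prop where
  | mk (Γ : Multiset (Fml α)) (A B : Fml α) :
      DiaLRule [(A ::ₘ Γ, some B)] (.dia A ::ₘ Γ, some (.dia B))

/-- Adding a set `Ax` of axioms to a calculus: the initial sequents `⇒ σ(A)`
for every substitution instance `σ(A)` of every `A ∈ Ax`. -/
def axRule (Ax : Fml α → Prop) : RuleSet α := fun ps c =>
  ps = [] ∧ ∃ (A : Fml α) (σ : α → Fml α), Ax A ∧ c = ((0 : Multiset (Fml α)), some (A.subst σ))

/-- Using a set of sequents as additional initial sequents (assumptions). -/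
def hypRule (H : Set (Seq α)) : RuleSet α := fun ps c => ps = [] ∧ c ∈ H

/-- The sequent calculus `LJ+Ax`. -/
def LJSys (Ax : Fml α → Prop) : RuleSet α := fun ps c => LJRule ps c ∨ axRule Ax ps c

/-- The sequent calculus `CK+Ax = LJ + K_□ + K_◇ + Ax`. -/
def CKSys (Ax : Fml α → Prop) : RuleSet α := fun ps c =>
  LJRule ps c ∨ KBoxRule ps c ∨ KDiaRule ps c ∨ axRule Ax ps c

/-- The sequent calculus `CK_□+Ax = LJ + K_□ + Ax`. -/
def CKBoxSys (Ax : Fml α → Prop) : RuleSet α := fun ps c =>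
  LJRule ps c ∨ KBoxRule ps c ∨ axRule Ax ps c

/-- The sequent calculus `BLL+Ax = LJ + ◇L + Ax`. -/
def BLLSys (Ax : Fml α → Prop) : RuleSet α := fun ps c =>
  LJRule ps c ∨ DiaLRule ps c ∨ axRule Ax ps c

/-- Provability of a sequent in the calculus generated by a rule set. -/
inductive Derives (R : RuleSet α) : Multiset (Fml α) → Option (Fml α) → Prop where
  | step {ps : List (Seq α)} {c : Seq α} (hr : R ps c)
      (hp : ∀ p ∈ ps, Derives R p.1 p.2) : Derives R c.1 c.2

/-- Basic formulas: generated from atoms, `⊤`, `⊥` by `∧`, `∨`, `◇`. -/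
inductive Basic : Fml α → Prop where
  | atom (a : α) : Basic (.atom a)
  | top : Basic (.top : Fml α)
  | bot : Basic (.bot : Fml α)
  | and {A B : Fml α} : Basic A → Basic B → Basic (.and A B)
  | or {A B : Fml α} : Basic A → Basic B → Basic (.or A B)
  | dia {A : Fml α} : Basic A → Basic (.dia A)

/-- Almost positive formulas: generated from basic formulas by `∧`, `∨`, `□`, `◇`
and implications `A → B` with `A` basic and `B` almost positive. -/
inductive AlmostPos : Fml α → Prop where
  | basic {A : Fml α} : Basic A → AlmostPos A
  | and {A B : Fml α} : AlmostPos A → AlmostPos B → AlmostPos (.and A B)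
  | or {A B : Fml α} : AlmostPos A → AlmostPos B → AlmostPos (.or A B)
  | box {A : Fml α} : AlmostPos A → AlmostPos (.box A)
  | dia {A : Fml α} : AlmostPos A → AlmostPos (.dia A)
  | imp {A B : Fml α} : Basic A → AlmostPos B → AlmostPos (.imp A B)

/-- Constructive formulas: generated from basic formulas by `∧`, `□` and
implications `A → B` with `A` almost positive and `B` constructive. -/
inductive Constructive : Fml α → Prop where
  | basic {A : Fml α} : Basic A → Constructive A
  | and {A B : Fml α} : Constructive A → Constructive B → Constructive (.and A B)
  | box {A : Fml α} : Constructive A → Constructive (.box A)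
  | imp {A B : Fml α} : AlmostPos A → Constructive B → Constructive (.imp A B)

/-- Harrop formulas: atoms, `⊥`, `⊤`, closed under `∧`, `□`, and implications
`A → B` with `A` arbitrary and `B` Harrop. -/
inductive Harrop : Fml α → Prop where
  | atom (a : α) : Harrop (.atom a)
  | top : Harrop (.top : Fml α)
  | bot : Harrop (.bot : Fml α)
  | and {A B : Fml α} : Harrop A → Harrop B → Harrop (.and A B)
  | box {A : Fml α} : Harrop A → Harrop (.box A)
  | imp (A : Fml α) {B : Fml α} : Harrop B → Harrop (.imp A B)

/-- Conjunction of a list of formulas (`⋀∅ = ⊤`). -/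
def conj : List (Fml α) → Fml α
  | [] => .top
  | [A] => A
  | A :: B :: l => .and A (conj (B :: l))

/-- Disjunction of a list of formulas (`⋁∅ = ⊥`). -/
def disj : List (Fml α) → Fml α
  | [] => .bot
  | [A] => A
  | A :: B :: l => .or A (disj (B :: l))

/-- Disjunction of a succedent (at most one formula; `⋁∅ = ⊥`). -/
def odisj : Option (Fml α) → Fml α
  | none => .bot
  | some A => A

/-- The multiset `{A_i → B_i}_{i ∈ I}` of implications of an indexed family. -/
def imps (AB : List (Fml α × Fml α)) : Multiset (Fml α) :=
  ↑(AB.map fun p => Fml.imp p.1 p.2)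

/-- The conjunction `⋀_{i∈I} (A_i → B_i)` of an indexed family of implications. -/
def impConj (AB : List (Fml α × Fml α)) : Fml α :=
  conj (AB.map fun p => Fml.imp p.1 p.2)

/-- Truth in the one-node *irreflexive* frame `𝒦ᵢ` under a Boolean valuation:
`□A` is always true and `◇A` is always false; the propositional connectives
are evaluated classically. -/
def evalI (v : α → Bool) : Fml α → Bool
  | .atom a  => v a
  | .top     => true
  | .bot     => false
  | .and A B => evalI v A && evalI v B
  | .or A B  => evalI v A || evalI v B
  | .imp A B => !evalI v A || evalI v B
  | .box _   => true
  | .dia _   => false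

/-- Truth in the one-node *reflexive* frame `𝒦ᵣ` under a Boolean valuation:
`□A` and `◇A` take the value of `A`. -/
def evalR (v : α → Bool) : Fml α → Bool
  | .atom a  => v a
  | .top     => true
  | .bot     => false
  | .and A B => evalR v A && evalR v B
  | .or A B  => evalR v A || evalR v B
  | .imp A B => !evalR v A || evalR v B
  | .box A   => evalR v A
  | .dia A   => evalR v A

/-- Validity of a sequent with respect to a one-node semantics: under every
valuation, if all formulas of the antecedent are true then so is the succedent. -/
def SeqValid (ev : (α → Bool) → Fml α → Bool) (Γ : Multiset (Fml α)) (Δ : Option (Fml α)) :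
    Prop :=
  ∀ v : α → Bool, (∀ A ∈ Γ, ev v A = true) → ∃ B ∈ Δ, ev v B = true

/-- `CK+Ax` is T-free: every provable sequent is valid in the irreflexive node frame. -/
def TFree (Ax : Fml α → Prop) : Prop :=
  ∀ (Γ : Multiset (Fml α)) (Δ : Option (Fml α)), Derives (CKSys Ax) Γ Δ → SeqValid evalI Γ Δ

/-- `CK+Ax` is T-full: every provable sequent is valid in the reflexive node
frame and the calculus proves `⇒ □p → p` and `⇒ p → ◇p`. -/
def TFull (Ax : Fml α → Prop) : Prop :=
  (∀ (Γ : Multiset (Fml α)) (Δ : Option (Fml α)), Derives (CKSys Ax) Γ Δ → SeqValid evalR Γ Δ) ∧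
  (∀ a : α, Derives (CKSys Ax) 0 (some (.imp (.box (.atom a)) (.atom a)))) ∧
  (∀ a : α, Derives (CKSys Ax) 0 (some (.imp (.atom a) (.dia (.atom a)))))

/-- Classical validity of a (modality-free) sequent: `⋀Γ → ⋁Δ` is true under
every Boolean valuation of the atoms. -/
def ClValid (Γ : Multiset (Fml α)) (Δ : Option (Fml α)) : Prop :=
  ∀ v : α → Bool, (∀ A ∈ Γ, evalI v A = true) → ∃ B ∈ Δ, evalI v B = true

/-- Nonempty conjunctions of atoms. -/
inductive AtomConj : Fml α → Prop where
  | single (a : α) : AtomConj (.atom a)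
  | and {A B : Fml α} : AtomConj A → AtomConj B → AtomConj (.and A B)

/-- Implicational Horn formulas: `⊥`, atoms, and implications `⋀Q → r` with `Q`
a nonempty multiset of atoms and `r` an atom or `⊥`. -/
inductive ImpHorn : Fml α → Prop where
  | bot : ImpHorn (.bot : Fml α)
  | atom (a : α) : ImpHorn (.atom a)
  | impAtom {A : Fml α} (hA : AtomConj A) (a : α) : ImpHorn (.imp A (.atom a))
  | impBot {A : Fml α} (hA : AtomConj A) : ImpHorn (.imp A .bot)

/-- Formulas of the form `◇^n p` with `p` an atom and `n ≥ 0`. -/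
inductive DiaPowAtom : Fml α → Prop where
  | atom (a : α) : DiaPowAtom (.atom a)
  | dia {A : Fml α} : DiaPowAtom A → DiaPowAtom (.dia A)

/-- Nonempty conjunctions `⋀_{i=1}^k ◇^{n_i} p_i` of formulas `◇^{n_i} p_i`. -/
inductive DiaConj : Fml α → Prop where
  | single {A : Fml α} : DiaPowAtom A → DiaConj A
  | and {A B : Fml α} : DiaConj A → DiaConj B → DiaConj (.and A B)

/-- Modal Horn formulas: `⊥` and atoms, closed under `□` and under implications
`A → B` with `A = ⋀_{i=1}^k ◇^{n_i} p_i` and `B` modal Horn. -/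
inductive ModalHorn : Fml α → Prop where
  | bot : ModalHorn (.bot : Fml α)
  | atom (a : α) : ModalHorn (.atom a)
  | box {A : Fml α} : ModalHorn A → ModalHorn (.box A)
  | imp {A B : Fml α} : DiaConj A → ModalHorn B → ModalHorn (.imp A B)

/-- The predicate "all atoms of the formula satisfy `P`". -/
def Fml.AtomsIn (P : α → Prop) : Fml α → Prop
  | .atom a  => P a
  | .top     => True
  | .bot     => True
  | .and A B => A.AtomsIn P ∧ B.AtomsIn P
  | .or A B  => A.AtomsIn P ∧ B.AtomsIn P
  | .imp A B => A.AtomsIn P ∧ B.AtomsIn P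
  | .box A   => A.AtomsIn P
  | .dia A   => A.AtomsIn P

/-- No `◇` occurs in the formula. -/
def Fml.DiaFree : Fml α → Prop
  | .atom _  => True
  | .top     => True
  | .bot     => True
  | .and A B => A.DiaFree ∧ B.DiaFree
  | .or A B  => A.DiaFree ∧ B.DiaFree
  | .imp A B => A.DiaFree ∧ B.DiaFree
  | .box A   => A.DiaFree
  | .dia _   => False

/-- No `□` occurs in the formula. -/
def Fml.BoxFree : Fml α → Prop
  | .atom _  => True
  | .top     => True
  | .bot     => True
  | .and A B => A.BoxFree ∧ B.BoxFree
  | .or A B  => A.BoxFree ∧ B.BoxFree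
  | .imp A B => A.BoxFree ∧ B.BoxFree
  | .box _   => False
  | .dia A   => A.BoxFree

/-- The formula is modality-free (propositional). -/
def Fml.ModFree : Fml α → Prop
  | .atom _  => True
  | .top     => True
  | .bot     => True
  | .and A B => A.ModFree ∧ B.ModFree
  | .or A B  => A.ModFree ∧ B.ModFree
  | .imp A B => A.ModFree ∧ B.ModFree
  | .box _   => False
  | .dia _   => False

/-- An angling of the language: an injection `φ ↦ ⟨φ⟩` from formulas into the
atoms whose image (the angled atoms) is disjoint from a fixed infinite set of
plain atoms. -/
structure Angling (α : Type) where
  angle : Fml α → α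
  plain : Set α
  inj : Function.Injective angle
  plain_infinite : plain.Infinite
  disjoint : ∀ φ : Fml α, angle φ ∉ plain

/-- `a` is an angled atom. -/
def Angling.Angled (S : Angling α) (a : α) : Prop := ∃ φ : Fml α, S.angle φ = a

/-- The translation `t`: `⊥^t = ⊥`, `p^t = ⟨p⟩`, `⊤^t = ⟨⊤⟩`,
`(A ∘ B)^t = (A^t ∘ B^t) ∧ ⟨A ∘ B⟩` and `(○A)^t = (○A^t) ∧ ⟨○A⟩`. -/
def Angling.tr (S : Angling α) : Fml α → Fml α
  | .atom a  => .atom (S.angle (.atom a))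
  | .top     => .atom (S.angle .top)
  | .bot     => .bot
  | .and A B => .and (.and (S.tr A) (S.tr B)) (.atom (S.angle (.and A B)))
  | .or A B  => .and (.or (S.tr A) (S.tr B)) (.atom (S.angle (.or A B)))
  | .imp A B => .and (.imp (S.tr A) (S.tr B)) (.atom (S.angle (.imp A B)))
  | .box A   => .and (.box (S.tr A)) (.atom (S.angle (.box A)))
  | .dia A   => .and (.dia (S.tr A)) (.atom (S.angle (.dia A)))

/-- Action of the standard substitution on atoms: an angled atom `⟨φ⟩` is sent
to `φ`; plain atoms are fixed. -/
noncomputable def Angling.stdAtom (S : Angling α) (a : α) : Fml α :=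
  haveI := Classical.propDecidable (∃ φ : Fml α, S.angle φ = a)
  if h : ∃ φ : Fml α, S.angle φ = a then h.choose else .atom a

/-- The standard substitution `s`: replaces each angled atom `⟨φ⟩` by `φ`,
fixes the plain atoms, and commutes with all connectives. -/
noncomputable def Angling.std (S : Angling α) : Fml α → Fml α :=
  Fml.subst S.stdAtom

/-- The Visser–Harrop property of a calculus. -/
def VisserHarrop (R : RuleSet α) : Prop :=
  ∀ (Γ : Multiset (Fml α)), (∀ A ∈ Γ, Harrop A) →
  ∀ (AB : List (Fml α × Fml α)) (C D : Fml α),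
    Derives R (Γ + imps AB) (some (.or C D)) →
    Derives R (Γ + imps AB) (some C) ∨
    Derives R (Γ + imps AB) (some D) ∨
    ∃ p ∈ AB, Derives R (Γ + imps AB) (some p.1)

/-- The disjunction property of a calculus. -/
def DisjProp (R : RuleSet α) : Prop :=
  ∀ C D : Fml α, Derives R 0 (some (.or C D)) →
    Derives R 0 (some C) ∨ Derives R 0 (some D)

/-- The formula interpretation `I(Γ ⇒ Δ) = ⋀Γ → ⋁Δ` belongs to `L` (stated for
every enumeration of the antecedent multiset as a list). -/
def interpIn (L : Set (Fml α)) (s : Seq α) : Prop :=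
  ∀ l : List (Fml α), (↑l : Multiset (Fml α)) = s.1 → Fml.imp (conj l) (odisj s.2) ∈ L

/- Named modal axioms (with `p := atom 0`, `q := atom 1`). -/
def axTa : Fml ℕ := .imp (.box (.atom 0)) (.atom 0)
def axTb : Fml ℕ := .imp (.atom 0) (.dia (.atom 0))
def axBa : Fml ℕ := .imp (.dia (.box (.atom 0))) (.atom 0)
def axBb : Fml ℕ := .imp (.atom 0) (.box (.dia (.atom 0)))
def ax4a : Fml ℕ := .imp (.box (.atom 0)) (.box (.box (.atom 0)))
def ax4b : Fml ℕ := .imp (.dia (.dia (.atom 0))) (.dia (.atom 0))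
def ax5a : Fml ℕ := .imp (.dia (.box (.atom 0))) (.box (.atom 0))
def ax5b : Fml ℕ := .imp (.dia (.atom 0)) (.box (.dia (.atom 0)))
def axDiaBot : Fml ℕ := .imp (.dia .bot) .bot
def axDiaOr : Fml ℕ :=
  .imp (.dia (.or (.atom 0) (.atom 1))) (.or (.dia (.atom 0)) (.dia (.atom 1)))
def axBoxImp : Fml ℕ :=
  .imp (.imp (.dia (.atom 0)) (.box (.atom 1))) (.box (.imp (.atom 0) (.atom 1)))

/-- The axioms of `X ⊆ {T, B, 4, 5}` in both their `a`- and `b`-versions. -/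
def XAxioms (tT tB t4 t5 : Bool) : Set (Fml ℕ) :=
  (if tT then ({axTa, axTb} : Set (Fml ℕ)) else ∅) ∪
  (if tB then ({axBa, axBb} : Set (Fml ℕ)) else ∅) ∪
  (if t4 then ({ax4a, ax4b} : Set (Fml ℕ)) else ∅) ∪
  (if t5 then ({ax5a, ax5b} : Set (Fml ℕ)) else ∅)

/-- The additional axioms of `IK` over `CK`. -/
def IKExtra : Set (Fml ℕ) := {axDiaBot, axDiaOr, axBoxImp}

/-- The right rule with premises `{Γ, φ̄_i ⇒ ψ̄_i}_{i∈I}` and conclusion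
`Γ, θ̄ ⇒ η̄`, closed under all substitutions of formulas for atoms and
multisets for the context `Γ`. -/
def rightRuleInst (prems : List (List (Fml α) × Option (Fml α)))
    (θ : List (Fml α)) (η : Option (Fml α)) : RuleSet α := fun ps c =>
  ∃ (σ : α → Fml α) (Γ : Multiset (Fml α)),
    ps = prems.map (fun pr =>
        ((Γ + ↑(pr.1.map (Fml.subst σ)) : Multiset (Fml α)), pr.2.map (Fml.subst σ))) ∧
    c = ((Γ + ↑(θ.map (Fml.subst σ)) : Multiset (Fml α)), η.map (Fml.subst σ))

/-- The left rule with premises `{Γ, φ̄_i ⇒ ψ̄_i}_{i∈I} ∪ {Γ, θ̄_j ⇒ Δ}_{j∈J}`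
and conclusion `Γ, η̄ ⇒ Δ`, closed under all substitutions of formulas for
atoms and multisets for `Γ` and `Δ`. -/
def leftRuleInst (prems : List (List (Fml α) × Option (Fml α)))
    (lefts : List (List (Fml α))) (η : List (Fml α)) : RuleSet α := fun ps c =>
  ∃ (σ : α → Fml α) (Γ : Multiset (Fml α)) (Δ : Option (Fml α)),
    ps = prems.map (fun pr =>
          ((Γ + ↑(pr.1.map (Fml.subst σ)) : Multiset (Fml α)), pr.2.map (Fml.subst σ)))
        ++ lefts.map (fun θj => ((Γ + ↑(θj.map (Fml.subst σ)) : Multiset (Fml α)), Δ)) ∧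
    c = ((Γ + ↑(η.map (Fml.subst σ)) : Multiset (Fml α)), Δ)

/-- The formula `Ax_R` of a right rule. -/
def AxRight (prems : List (List (Fml α) × Option (Fml α)))
    (θ : List (Fml α)) (η : Option (Fml α)) : Fml α :=
  .imp (.and (conj (prems.map fun pr => .imp (conj pr.1) (odisj pr.2))) (conj θ)) (odisj η)

/-- The formula `Ax_R` of a left rule. -/
def AxLeft (prems : List (List (Fml α) × Option (Fml α)))
    (lefts : List (List (Fml α))) (η : List (Fml α)) : Fml α :=
  .imp (.and (conj (prems.map fun pr => .imp (conj pr.1) (odisj pr.2))) (conj η))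
    (disj (lefts.map conj))

/-- The forgetful translation `f_i`: fixes atoms, `⊤`, `⊥`, commutes with
`∧`, `∨`, `→`, `□`, and sends every `◇A` to `⊥`. -/
def fi : Fml α → Fml α
  | .atom a  => .atom a
  | .top     => .top
  | .bot     => .bot
  | .and A B => .and (fi A) (fi B)
  | .or A B  => .or (fi A) (fi B)
  | .imp A B => .imp (fi A) (fi B)
  | .box A   => .box (fi A)
  | .dia _   => .bot

/-- The forgetful translation `f_r`: fixes atoms, `⊤`, `⊥`, commutes with
`∧`, `∨`, `→`, `□`, and sends `◇A` to `f_r A`. -/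
def fr : Fml α → Fml α
  | .atom a  => .atom a
  | .top     => .top
  | .bot     => .bot
  | .and A B => .and (fr A) (fr B)
  | .or A B  => .or (fr A) (fr B)
  | .imp A B => .imp (fr A) (fr B)
  | .box A   => .box (fr A)
  | .dia A   => fr A

/-! `Γ_A` mirrors the translation: it contains the angled atom `⟨A⟩` that `A^t` conjoins at the
top, and recursively the sets of the Harrop parts, under `□` for `□B` and under `⟨C⟩ → ·` for
`C → B`. The antecedent `C` may be arbitrary because `C^t` entails `⟨C⟩`, and that is all that is
needed to fire the implications `⟨C⟩ → G`. Under `s` the angled atoms become the subformulas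
themselves, so `⋀Γ_A^s` is equivalent to `A`. -/

namespace Derives

variable {α : Type} {Ax : Fml α → Prop} {Γ Γ' : Multiset (Fml α)} {Δ : Option (Fml α)}
  {A B : Fml α}

lemma of_lj {ps : List (Seq α)} {c : Seq α} (h : LJRule ps c)
    (hps : ∀ p ∈ ps, Derives (CKSys Ax) p.1 p.2) : Derives (CKSys Ax) c.1 c.2 :=
  .step (Or.inl h) hps

lemma ax (A : Fml α) (Γ : Multiset (Fml α)) : Derives (CKSys Ax) (A ::ₘ Γ) (some A) :=
  of_lj (LJRule.id Γ A) (by simp)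

lemma botL (Γ : Multiset (Fml α)) (Δ : Option (Fml α)) : Derives (CKSys Ax) (.bot ::ₘ Γ) Δ :=
  of_lj (LJRule.botL Γ Δ) (by simp)

lemma topR (Γ : Multiset (Fml α)) : Derives (CKSys Ax) Γ (some .top) :=
  of_lj (LJRule.topR Γ) (by simp)

lemma weaken (A : Fml α) (h : Derives (CKSys Ax) Γ Δ) : Derives (CKSys Ax) (A ::ₘ Γ) Δ :=
  of_lj (LJRule.wL A Γ Δ) (by simpa using h)

lemma cut (h₁ : Derives (CKSys Ax) Γ (some A)) (h₂ : Derives (CKSys Ax) (A ::ₘ Γ) Δ) :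
    Derives (CKSys Ax) Γ Δ :=
  of_lj (LJRule.cut A Γ Δ) (by simp [h₁, h₂])

lemma andR (h₁ : Derives (CKSys Ax) Γ (some A)) (h₂ : Derives (CKSys Ax) Γ (some B)) :
    Derives (CKSys Ax) Γ (some (.and A B)) :=
  of_lj (LJRule.andR A B Γ) (by simp [h₁, h₂])

lemma andL₁ (h : Derives (CKSys Ax) (A ::ₘ Γ) Δ) : Derives (CKSys Ax) (.and A B ::ₘ Γ) Δ :=
  of_lj (LJRule.andL₁ A B Γ Δ) (by simpa using h)

lemma andL₂ (h : Derives (CKSys Ax) (B ::ₘ Γ) Δ) : Derives (CKSys Ax) (.and A B ::ₘ Γ) Δ :=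
  of_lj (LJRule.andL₂ A B Γ Δ) (by simpa using h)

lemma impR (h : Derives (CKSys Ax) (A ::ₘ Γ) (some B)) : Derives (CKSys Ax) Γ (some (.imp A B)) :=
  of_lj (LJRule.impR A B Γ) (by simpa using h)

lemma impL (h₁ : Derives (CKSys Ax) Γ (some A)) (h₂ : Derives (CKSys Ax) (B ::ₘ Γ) Δ) :
    Derives (CKSys Ax) (.imp A B ::ₘ Γ) Δ :=
  of_lj (LJRule.impL A B Γ Δ) (by simp [h₁, h₂])

lemma kBox (h : Derives (CKSys Ax) Γ (some A)) :
    Derives (CKSys Ax) (Γ.map .box) (some (.box A)) :=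
  .step (c := (Γ.map .box, some (.box A))) (Or.inr (Or.inl (KBoxRule.mk Γ A))) (by simpa using h)

lemma weaken_le (hle : Γ' ≤ Γ) (h : Derives (CKSys Ax) Γ' Δ) : Derives (CKSys Ax) Γ Δ := by
  obtain ⟨Θ, rfl⟩ := Multiset.le_iff_exists_add.mp hle
  induction Θ using Multiset.induction with
  | empty => simpa using h
  | cons C Θ ih => simpa [← Multiset.cons_add, Multiset.add_cons] using weaken C (ih le_self_add)

lemma of_mem (h : A ∈ Γ) : Derives (CKSys Ax) Γ (some A) := by
  obtain ⟨Θ, rfl⟩ := Multiset.exists_cons_of_mem h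
  exact ax A Θ

lemma mp (hAB : .imp A B ∈ Γ) (hA : Derives (CKSys Ax) Γ (some A)) :
    Derives (CKSys Ax) Γ (some B) := by
  obtain ⟨Θ, rfl⟩ := Multiset.exists_cons_of_mem hAB
  refine cut hA ?_
  rw [Multiset.cons_swap]
  exact impL (ax A Θ) (ax B _)

lemma conjR : ∀ {l : List (Fml α)}, (∀ A ∈ l, Derives (CKSys Ax) Γ (some A)) →
    Derives (CKSys Ax) Γ (some (conj l))
  | [], _ => topR Γ
  | [_], h => h _ List.mem_cons_self
  | _ :: _ :: _, h => andR (h _ List.mem_cons_self) (conjR fun A hA => h A (.tail _ hA))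

lemma conjL_of_mem : ∀ {l : List (Fml α)}, A ∈ l → Derives (CKSys Ax) (conj l ::ₘ Γ) (some A)
  | [_], .head _ => ax _ _
  | _ :: _ :: _, .head _ => andL₁ (ax _ _)
  | _ :: _ :: _, .tail _ h => andL₂ (conjL_of_mem h)

lemma cut_list : ∀ {l : List (Fml α)} {Γ : Multiset (Fml α)},
    (∀ G ∈ l, Derives (CKSys Ax) Γ (some G)) → Derives (CKSys Ax) (↑l + Γ) Δ →
    Derives (CKSys Ax) Γ Δ
  | [], _, _, h => by simpa using h
  | G :: l, _, hl, h =>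
    cut (hl G List.mem_cons_self) <|
      cut_list (fun G' hG' => weaken G (hl G' (.tail _ hG')))
        (by rwa [Multiset.add_cons, ← Multiset.cons_add, Multiset.cons_coe])

end Derives

namespace Angling

variable {α : Type} {Ax : Fml α → Prop} (S : Angling α)

lemma std_angle (C : Fml α) : S.std (.atom (S.angle C)) = C := by
  have h : ∃ φ, S.angle φ = S.angle C := ⟨C, rfl⟩
  simp only [std, Fml.subst, stdAtom, dif_pos h]
  exact S.inj h.choose_spec

lemma tr_derives_angle (C : Fml α) (Γ : Multiset (Fml α)) :
    Derives (CKSys Ax) (S.tr C ::ₘ Γ) (some (.atom (S.angle C))) := by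
  cases C <;> first | exact .ax _ _ | exact .botL _ _ | exact .andL₂ (.ax _ _)

/-- The set `Γ_A`. Outside the Harrop fragment (`∨`, `◇`) only `⟨A⟩` is kept, which makes the
equivalence of `⋀Γ_A^s` and `A` hold for every formula. -/
def hornSet : Fml α → List (Fml α)
  | .bot => [.bot]
  | .and B C => hornSet B ++ hornSet C ++ [.atom (S.angle (.and B C))]
  | .box B => (hornSet B).map .box ++ [.atom (S.angle (.box B))]
  | .imp C B => (hornSet B).map (.imp (.atom (S.angle C))) ++ [.atom (S.angle (.imp C B))]
  | A => [.atom (S.angle A)]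

lemma modalHorn_of_mem_hornSet {A F : Fml α} (hF : F ∈ S.hornSet A) :
    ModalHorn F ∧ F.AtomsIn S.Angled := by
  have angled (C : Fml α) :
      ModalHorn (.atom (S.angle C)) ∧ (Fml.atom (S.angle C)).AtomsIn S.Angled :=
    ⟨.atom _, C, rfl⟩
  induction A generalizing F with
  | bot =>
    rw [hornSet, List.mem_singleton] at hF
    exact hF ▸ ⟨.bot, trivial⟩
  | and B C ihB ihC =>
    simp only [hornSet, List.mem_append, List.mem_singleton] at hF
    rcases hF with (hF | hF) | rfl
    exacts [ihB hF, ihC hF, angled _]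
  | box B ih =>
    simp only [hornSet, List.mem_append, List.mem_map, List.mem_singleton] at hF
    rcases hF with ⟨G, hG, rfl⟩ | rfl
    exacts [⟨.box (ih hG).1, (ih hG).2⟩, angled _]
  | imp C B _ ih =>
    simp only [hornSet, List.mem_append, List.mem_map, List.mem_singleton] at hF
    rcases hF with ⟨G, hG, rfl⟩ | rfl
    exacts [⟨.imp (.single (.atom _)) (ih hG).1, ⟨C, rfl⟩, (ih hG).2⟩, angled _]
  | _ =>
    simp only [hornSet, List.mem_singleton] at hF
    exact hF ▸ angled _

lemma mem_map_std_hornSet (A : Fml α) : A ∈ (S.hornSet A).map S.std := by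
  cases A <;> simp [hornSet, std_angle]; rfl

lemma std_hornSet_derives (A : Fml α) :
    Derives (CKSys Ax) (conj ((S.hornSet A).map S.std) ::ₘ 0) (some A) :=
  .conjL_of_mem (S.mem_map_std_hornSet A)

lemma derives_std_of_mem_hornSet {A F : Fml α} (hF : F ∈ S.hornSet A) :
    Derives (CKSys Ax) (A ::ₘ 0) (some (S.std F)) := by
  induction A generalizing F with
  | and B C ihB ihC =>
    simp only [hornSet, List.mem_append, List.mem_singleton] at hF
    rcases hF with (hF | hF) | rfl
    exacts [.andL₁ (ihB hF), .andL₂ (ihC hF), by rw [std_angle]; exact .ax _ _]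
  | box B ih =>
    simp only [hornSet, List.mem_append, List.mem_map, List.mem_singleton] at hF
    rcases hF with ⟨G, hG, rfl⟩ | rfl
    · simpa [std, Fml.subst] using (ih hG).kBox
    · rw [std_angle]; exact .ax _ _
  | imp C B _ ih =>
    simp only [hornSet, List.mem_append, List.mem_map, List.mem_singleton] at hF
    rcases hF with ⟨G, hG, rfl⟩ | rfl
    · show Derives _ _ (some (.imp (S.std (.atom (S.angle C))) (S.std G)))
      rw [std_angle]
      refine .impR ?_
      rw [Multiset.cons_swap]
      exact .impL (.ax C 0) (.weaken_le (by simp) (ih hG))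
    · rw [std_angle]; exact .ax _ _
  | _ => simp_all [hornSet, std_angle]; exact .ax _ _

lemma derives_std_hornSet (A : Fml α) :
    Derives (CKSys Ax) (A ::ₘ 0) (some (conj ((S.hornSet A).map S.std))) :=
  .conjR fun _ hG => by
    obtain ⟨F, hF, rfl⟩ := List.mem_map.mp hG
    exact S.derives_std_of_mem_hornSet hF

lemma hornSet_derives_tr {A : Fml α} (hA : Harrop A) :
    Derives (CKSys Ax) ↑(S.hornSet A) (some (S.tr A)) := by
  have angle_mem {Γ : List (Fml α)} {C : Fml α} :
      Derives (CKSys Ax) ↑(Γ ++ [Fml.atom (S.angle C)]) (some (.atom (S.angle C))) :=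
    .of_mem (by simp)
  induction hA with
  | atom | top | bot => exact .of_mem (by simp [hornSet, tr])
  | and _ _ ihB ihC =>
    refine .andR (.andR (.weaken_le ?_ ihB) (.weaken_le ?_ ihC)) angle_mem <;>
      simp only [hornSet, ← Multiset.coe_add]
    exacts [le_add_right (le_add_right le_rfl), le_add_right (le_add_left le_rfl)]
  | box _ ih =>
    refine .andR (.weaken_le (Multiset.coe_le.mpr (List.sublist_append_left _ _).subperm) ?_)
      angle_mem
    simpa using ih.kBox
  | @imp C B _ ih =>
    refine .andR (.impR ?_) angle_mem
    refine .cut (S.tr_derives_angle C _)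
      (.cut_list (l := S.hornSet B) (fun G hG => .mp ?_ (.ax _ _)) ?_)
    · simp [hornSet, hG]
    · exact .weaken_le (Multiset.le_add_right _ _) ih

end Angling

/-- for every Harrop formula `A` there is a finite multiset `Γ_A`
of modal Horn formulas over `⊥` and angled atoms with `CK ⊢ Γ_A ⇒ A^t` and
`CK ⊢ ⋀Γ_A^s ⇔ A`. -/
theorem statement_9 (S : Angling ℕ) (A : Fml ℕ) (hA : Harrop A) :
    ∃ GA : List (Fml ℕ),
      (∀ F ∈ GA, ModalHorn F ∧ F.AtomsIn S.Angled) ∧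
      Derives (CKSys (fun _ : Fml ℕ => False))
        (↑GA : Multiset (Fml ℕ)) (some (S.tr A)) ∧
      Derives (CKSys (fun _ : Fml ℕ => False))
        (conj (GA.map S.std) ::ₘ 0) (some A) ∧
      Derives (CKSys (fun _ : Fml ℕ => False))
        (A ::ₘ 0) (some (conj (GA.map S.std))) :=
  ⟨S.hornSet A, fun _ => S.modalHorn_of_mem_hornSet, S.hornSet_derives_tr hA,
    S.std_hornSet_derives A, S.derives_std_hornSet A⟩

end UPT
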